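/- arXiv:2106.07689 — 5 statements merged into one kernel-verified Lean document; each statement's English description precedes it below -/
import Mathlib

section
/- Let O ⊆ ℝᵈ be an open set, ε > 0, and let u : ℝᵈ → ℝ be twice continuously differentiable on O with 0 < |u(x)| < 1 for every x ∈ O, satisfying the semilinear equation −ε·Δu(x) + u(x) − sign(u(x)) = 0 for all x ∈ O. Define w : O → ℝ by w(x) = −√ε · log(1 − |u(x)|) · sign(u(x)). Then w is twice continuously differentiable on O and satisfies the viscosity Eikonal equation −√ε·Δw(x) + sign(u(x))·(‖∇w(x)‖² − 1) = 0 for every x ∈ O. -/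
open MeasureTheory Filter Topology Metric Set

/-- sign function: `1` for positive, `-1` otherwise (only used at nonzero arguments). -/
noncomputable def sgn (s : ℝ) : ℝ := if 0 < s then 1 else -1

/-- Laplacian: sum of the second partial derivatives along the standard basis. -/
noncomputable def laplacian {d : ℕ} (f : EuclideanSpace ℝ (Fin d) → ℝ)
    (x : EuclideanSpace ℝ (Fin d)) : ℝ :=
  ∑ i : Fin d, fderiv ℝ (fun y => fderiv ℝ f y (EuclideanSpace.single i 1)) x
    (EuclideanSpace.single i 1)

/-!
Near a point where `u ≠ 0` the sign `σ` of `u` is locally constant, so `w = φ ∘ u` locally with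
`φ s = -σ √ε log (1 - σ s)`. This profile solves `√ε φ'' = σ φ'²`, so in the chain rule
`Δ (φ ∘ u) = φ' Δu + φ'' ‖∇u‖²` the gradient terms of the Eikonal equation cancel, and what is left,
`-ε Δu / (1 - |u|) - σ`, vanishes by the equation for `u` because `u - σ = -σ (1 - |u|)`.
-/

open InnerProductSpace

lemma sgn_mul_abs (s : ℝ) : sgn s * |s| = s := by
  unfold sgn; split_ifs with h
  · simp [abs_of_pos h]
  · simp [abs_of_nonpos (not_lt.1 h)]

lemma sgn_mul_self (s : ℝ) : sgn s * sgn s = 1 := by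
  unfold sgn; split_ifs <;> norm_num

lemma abs_eq_sgn_mul (s : ℝ) : |s| = sgn s * s := by
  linear_combination (-|s|) * sgn_mul_self s + sgn s * sgn_mul_abs s

lemma sgn_eventuallyEq {t : ℝ} (ht : t ≠ 0) : sgn =ᶠ[𝓝 t] fun _ => sgn t := by
  rcases ht.lt_or_gt with ht | ht
  · filter_upwards [eventually_lt_nhds ht] with s hs
    simp [sgn, not_lt.2 hs.le, not_lt.2 ht.le]
  · filter_upwards [eventually_gt_nhds ht] with s hs
    simp [sgn, hs, ht]

lemma one_sub_sgn_mul_ne_zero {t : ℝ} (ht : |t| < 1) : 1 - sgn t * t ≠ 0 := by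
  rw [← abs_eq_sgn_mul]; linarith

lemma abs_eventuallyEq_sgn_mul {t : ℝ} (ht : t ≠ 0) :
    (fun s => |s|) =ᶠ[𝓝 t] fun s => sgn t * s := by
  filter_upwards [sgn_eventuallyEq ht] with s hs
  rw [abs_eq_sgn_mul, hs]

section ChainRule

variable {E : Type*} [NormedAddCommGroup E] [NormedSpace ℝ E]

lemma fderiv_comp_eq_deriv_smul {φ : ℝ → ℝ} {u : E → ℝ} {x : E}
    (hφ : DifferentiableAt ℝ φ (u x)) (hu : DifferentiableAt ℝ u x) :
    fderiv ℝ (φ ∘ u) x = deriv φ (u x) • fderiv ℝ u x :=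
  (hφ.hasDerivAt.comp_hasFDerivAt x hu.hasFDerivAt).fderiv

lemma fderiv_comp_apply_eventuallyEq {φ : ℝ → ℝ} {u : E → ℝ} {x : E}
    (hφ : ContDiffAt ℝ 2 φ (u x)) (hu : ContDiffAt ℝ 2 u x) (v : E) :
    (fun y => fderiv ℝ (φ ∘ u) y v) =ᶠ[𝓝 x] fun y => deriv φ (u y) * fderiv ℝ u y v := by
  filter_upwards [hu.eventually (by simp), hu.continuousAt.eventually (hφ.eventually (by simp))]
    with y huy hφy
  rw [fderiv_comp_eq_deriv_smul (hφy.differentiableAt two_ne_zero)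
    (huy.differentiableAt two_ne_zero)]
  rfl

theorem fderiv_fderiv_comp_apply {φ : ℝ → ℝ} {u : E → ℝ} {x : E}
    (hφ : ContDiffAt ℝ 2 φ (u x)) (hu : ContDiffAt ℝ 2 u x) (v : E) :
    fderiv ℝ (fun y => fderiv ℝ (φ ∘ u) y v) x v =
      deriv φ (u x) * fderiv ℝ (fun y => fderiv ℝ u y v) x v +
        deriv (deriv φ) (u x) * fderiv ℝ u x v ^ 2 := by
  have hφ' : HasFDerivAt (fun y => deriv φ (u y)) (deriv (deriv φ) (u x) • fderiv ℝ u x) x :=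
    ((hφ.derivWithin (m := 1) (by norm_num)).differentiableAt
      one_ne_zero).hasDerivAt.comp_hasFDerivAt x (hu.differentiableAt two_ne_zero).hasFDerivAt
  have hu' : DifferentiableAt ℝ (fun y => fderiv ℝ u y v) x :=
    ((hu.fderiv_right (m := 1) (by norm_num)).clm_apply contDiffAt_const).differentiableAt
      one_ne_zero
  have hprod : HasFDerivAt (fun y => deriv φ (u y) * fderiv ℝ u y v) _ x :=
    hφ'.mul hu'.hasFDerivAt
  rw [(fderiv_comp_apply_eventuallyEq hφ hu v).fderiv_eq, hprod.fderiv]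
  simp only [add_apply, smul_apply, smul_eq_mul]
  ring

end ChainRule

lemma norm_gradient {F : Type*} [NormedAddCommGroup F] [InnerProductSpace ℝ F] [CompleteSpace F]
    (f : F → ℝ) (x : F) : ‖gradient f x‖ = ‖fderiv ℝ f x‖ :=
  (toDual ℝ F).symm.norm_map _

theorem laplacian_comp {d : ℕ} {φ : ℝ → ℝ} {u : EuclideanSpace ℝ (Fin d) → ℝ}
    {x : EuclideanSpace ℝ (Fin d)} (hφ : ContDiffAt ℝ 2 φ (u x)) (hu : ContDiffAt ℝ 2 u x) :
    laplacian (φ ∘ u) x =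
      deriv φ (u x) * laplacian u x + deriv (deriv φ) (u x) * ‖fderiv ℝ u x‖ ^ 2 := by
  simp only [laplacian, fderiv_fderiv_comp_apply hφ hu, Finset.sum_add_distrib, ← Finset.mul_sum,
    (EuclideanSpace.basisFun (Fin d) ℝ).norm_dual, EuclideanSpace.basisFun_apply]

noncomputable def logProfile (c s : ℝ) : ℝ := -c * Real.log (1 - |s|) * sgn s

section LogProfile

variable (c : ℝ) {t : ℝ}

lemma logProfile_eventuallyEq (ht : t ≠ 0) :
    logProfile c =ᶠ[𝓝 t] fun s => -(c * sgn t) * Real.log (1 - sgn t * s) := by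
  filter_upwards [sgn_eventuallyEq ht, abs_eventuallyEq_sgn_mul ht] with s hsgn habs
  simp only [logProfile, hsgn, habs]
  ring

lemma contDiffAt_logProfile (ht₀ : t ≠ 0) (ht₁ : |t| < 1) {n : WithTop ℕ∞} :
    ContDiffAt ℝ n (logProfile c) t := by
  have hpos := one_sub_sgn_mul_ne_zero ht₁
  refine ContDiffAt.congr_of_eventuallyEq ?_ (logProfile_eventuallyEq c ht₀)
  exact contDiffAt_const.mul ((contDiffAt_const.sub (contDiffAt_const.mul contDiffAt_id)).log hpos)

lemma hasDerivAt_logProfile (ht₀ : t ≠ 0) (ht₁ : |t| < 1) :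
    HasDerivAt (logProfile c) (c / (1 - |t|)) t := by
  have hpos := one_sub_sgn_mul_ne_zero ht₁
  have h := (((hasDerivAt_id' t).const_mul (sgn t)).const_sub 1).log hpos
    |>.const_mul (-(c * sgn t))
  refine (h.congr_of_eventuallyEq (logProfile_eventuallyEq c ht₀)).congr_deriv ?_
  rw [abs_eq_sgn_mul]
  field_simp
  linear_combination c * sgn_mul_self t

lemma deriv_logProfile (ht₀ : t ≠ 0) (ht₁ : |t| < 1) :
    deriv (logProfile c) t = c / (1 - |t|) :=
  (hasDerivAt_logProfile c ht₀ ht₁).deriv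

lemma deriv_deriv_logProfile (ht₀ : t ≠ 0) (ht₁ : |t| < 1) :
    deriv (deriv (logProfile c)) t = c * sgn t / (1 - |t|) ^ 2 := by
  have hderiv : deriv (logProfile c) =ᶠ[𝓝 t] fun s => c / (1 - sgn t * s) := by
    have hopen : IsOpen {s : ℝ | s ≠ 0 ∧ |s| < 1} :=
      isOpen_ne.inter (isOpen_lt continuous_abs continuous_const)
    filter_upwards [hopen.mem_nhds ⟨ht₀, ht₁⟩, abs_eventuallyEq_sgn_mul ht₀] with s hs habs
    rw [deriv_logProfile c hs.1 hs.2, habs]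
  have hpos := one_sub_sgn_mul_ne_zero ht₁
  have h : HasDerivAt (fun s => c / (1 - sgn t * s)) _ t :=
    (hasDerivAt_const t c).div (((hasDerivAt_id' t).const_mul (sgn t)).const_sub 1) hpos
  rw [hderiv.deriv_eq, h.deriv, abs_eq_sgn_mul]
  field_simp
  ring

end LogProfile

theorem stmt0 {d : ℕ} (O : Set (EuclideanSpace ℝ (Fin d))) (hO : IsOpen O)
    (ε : ℝ) (hε : 0 < ε) (u : EuclideanSpace ℝ (Fin d) → ℝ)
    (hu : ContDiffOn ℝ 2 u O)
    (hub : ∀ x ∈ O, 0 < |u x| ∧ |u x| < 1)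
    (heq : ∀ x ∈ O, -ε * laplacian u x + u x - sgn (u x) = 0)
    (w : EuclideanSpace ℝ (Fin d) → ℝ)
    (hw : ∀ x, w x = -Real.sqrt ε * Real.log (1 - |u x|) * sgn (u x)) :
    ContDiffOn ℝ 2 w O ∧
    ∀ x ∈ O, -Real.sqrt ε * laplacian w x + sgn (u x) * (‖gradient w x‖ ^ 2 - 1) = 0 := by
  obtain rfl : w = logProfile (Real.sqrt ε) ∘ u := funext hw
  have hu₀ : ∀ x ∈ O, u x ≠ 0 := fun x hx => abs_pos.1 (hub x hx).1
  have hφ (x) (hx : x ∈ O) : ContDiffAt ℝ 2 (logProfile (Real.sqrt ε)) (u x) :=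
    contDiffAt_logProfile _ (hu₀ x hx) (hub x hx).2
  have hux (x) (hx : x ∈ O) : ContDiffAt ℝ 2 u x := hu.contDiffAt (hO.mem_nhds hx)
  refine ⟨fun x hx => ((hφ x hx).comp x (hux x hx)).contDiffWithinAt, fun x hx => ?_⟩
  have hc : Real.sqrt ε * Real.sqrt ε = ε := Real.mul_self_sqrt hε.le
  have ha : 1 - |u x| ≠ 0 := by linarith [(hub x hx).2]
  rw [laplacian_comp (hφ x hx) (hux x hx), norm_gradient,
    fderiv_comp_eq_deriv_smul ((hφ x hx).differentiableAt two_ne_zero)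
      ((hux x hx).differentiableAt two_ne_zero), norm_smul, Real.norm_eq_abs, mul_pow, sq_abs,
    deriv_logProfile _ (hu₀ x hx) (hub x hx).2, deriv_deriv_logProfile _ (hu₀ x hx) (hub x hx).2]
  field_simp
  linear_combination (1 - |u x|) * heq x hx + (|u x| - 1) * laplacian u x * hc +
    (1 - |u x|) * sgn_mul_abs (u x)
end

section
/- Let O ⊆ ℝᵈ be an open set, ε > 0, and let u : ℝᵈ → ℝ be continuously differentiable with u(x) ≠ 0 for every x ∈ O. Let ψ : ℝᵈ → ℝ be a test function on O. Define G : ℝ → ℝ by G(t) = ∫_{ℝᵈ} [ε‖∇u(x) + t∇ψ(x)‖² − ε‖∇u(x)‖² + W(u(x) + tψ(x)) − W(u(x))] dx (the integrand vanishes outside the compact support of ψ, so the integral is well defined). Then G is differentiable at t = 0, and G'(0) = ∫_{ℝᵈ} [2ε·⟨∇u(x), ∇ψ(x)⟩ + 2(u(x) − sign(u(x)))·ψ(x)] dx. -/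
open MeasureTheory Filter Topology Metric Set
open scoped RealInnerProductSpace

lemma sgn_abs_aux {a b : ℝ} (h : |b| < |a|) : |a + b| = |a| + sgn a * b := by
  have hb := abs_lt.mp h
  unfold sgn
  rcases lt_trichotomy a 0 with hlt | heq | hgt
  · rw [abs_of_neg hlt] at hb ⊢
    rw [abs_of_neg (by linarith), if_neg (by linarith)]
    ring
  · rw [heq, abs_zero] at h; linarith [abs_nonneg b]
  · rw [abs_of_pos hgt] at hb ⊢
    rw [abs_of_pos (by linarith), if_pos hgt]
    ring

theorem stmt3 {d : ℕ} (O : Set (EuclideanSpace ℝ (Fin d))) (hO : IsOpen O)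
    (ε : ℝ) (hε : 0 < ε)
    (u : EuclideanSpace ℝ (Fin d) → ℝ) (hu : ContDiff ℝ 1 u)
    (hune : ∀ x ∈ O, u x ≠ 0)
    (ψ : EuclideanSpace ℝ (Fin d) → ℝ)
    (hψ : ContDiff ℝ (⊤ : ℕ∞) ψ) (hψc : HasCompactSupport ψ) (hψO : tsupport ψ ⊆ O)
    (G : ℝ → ℝ)
    (hG : ∀ t, G t = ∫ x, (ε * ‖gradient u x + t • gradient ψ x‖ ^ 2
        - ε * ‖gradient u x‖ ^ 2
        + ((u x + t * ψ x) ^ 2 - 2 * |u x + t * ψ x| + 1)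
        - ((u x) ^ 2 - 2 * |u x| + 1))) :
    HasDerivAt G (∫ x, (2 * ε * ⟪gradient u x, gradient ψ x⟫
        + 2 * (u x - sgn (u x)) * ψ x)) 0 := by
  -- notation
  set g₁ : EuclideanSpace ℝ (Fin d) → ℝ :=
    fun x => 2 * ε * ⟪gradient u x, gradient ψ x⟫ + 2 * (u x - sgn (u x)) * ψ x with hg₁def
  set g₂ : EuclideanSpace ℝ (Fin d) → ℝ :=
    fun x => ε * ‖gradient ψ x‖ ^ 2 + ψ x ^ 2 with hg₂def
  -- vanishing outside the support
  have hψ0 : ∀ x ∉ tsupport ψ, ψ x = 0 := fun x hx => image_eq_zero_of_notMem_tsupport hx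
  have hgψ0 : ∀ x ∉ tsupport ψ, gradient ψ x = 0 := by
    intro x hx
    have hev : ψ =ᶠ[𝓝 x] (fun _ => (0 : ℝ)) := by
      filter_upwards [(isClosed_tsupport ψ).isOpen_compl.mem_nhds hx] with y hy
      exact image_eq_zero_of_notMem_tsupport hy
    rw [hev.gradient_eq]
    exact gradient_const (F := EuclideanSpace ℝ (Fin d)) (x := x) (c := (0:ℝ))
  -- continuity of gradients
  have hgu_cont : Continuous (gradient u) :=
    (InnerProductSpace.toDual ℝ (EuclideanSpace ℝ (Fin d))).symm.continuous.comp (hu.continuous_fderiv one_ne_zero)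
  have hgψ_cont : Continuous (gradient ψ) :=
    (InnerProductSpace.toDual ℝ (EuclideanSpace ℝ (Fin d))).symm.continuous.comp (hψ.continuous_fderiv (by simp))
  -- continuity of sgn ∘ u · ψ
  have hsgn_cont : Continuous (fun x => sgn (u x) * ψ x) := by
    rw [continuous_iff_continuousAt]
    intro x
    by_cases hx : x ∈ tsupport ψ
    · have hux := hune x (hψO hx)
      rcases hux.lt_or_gt with h | h
      · have hev : ∀ᶠ y in 𝓝 x, u y < 0 :=
          (isOpen_lt hu.continuous continuous_const).mem_nhds h
        refine ContinuousAt.congr (f := fun y => (-1 : ℝ) * ψ y)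
          (continuousAt_const.mul hψ.continuous.continuousAt) ?_
        filter_upwards [hev] with y hy
        simp [sgn, not_lt.mpr hy.le]
      · have hev : ∀ᶠ y in 𝓝 x, 0 < u y :=
          (isOpen_lt continuous_const hu.continuous).mem_nhds h
        refine ContinuousAt.congr (f := fun y => (1 : ℝ) * ψ y)
          (continuousAt_const.mul hψ.continuous.continuousAt) ?_
        filter_upwards [hev] with y hy
        simp [sgn, hy]
    · refine ContinuousAt.congr (f := fun _ => (0 : ℝ)) continuousAt_const ?_
      filter_upwards [(isClosed_tsupport ψ).isOpen_compl.mem_nhds hx] with y hy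
      simp [image_eq_zero_of_notMem_tsupport hy]
  -- integrability
  have hg₁_cont : Continuous g₁ := by
    have : g₁ = fun x => 2 * ε * ⟪gradient u x, gradient ψ x⟫
        + (2 * (u x * ψ x) - 2 * (sgn (u x) * ψ x)) := by
      funext x; simp only [hg₁def]; ring
    rw [this]
    exact (continuous_const.mul (hgu_cont.inner hgψ_cont)).add
      ((continuous_const.mul (hu.continuous.mul hψ.continuous)).sub
        (continuous_const.mul hsgn_cont))
  have hg₂_cont : Continuous g₂ :=
    (continuous_const.mul ((hgψ_cont.norm).pow 2)).add ((hψ.continuous).pow 2)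
  have hg₁_supp : HasCompactSupport g₁ :=
    HasCompactSupport.intro hψc fun x hx => by
      simp only [hg₁def, hgψ0 x hx]
      simp [hg₁def, hψ0 x hx, hgψ0 x hx]
  have hg₂_supp : HasCompactSupport g₂ :=
    HasCompactSupport.intro hψc fun x hx => by
      simp [hg₂def, hψ0 x hx, hgψ0 x hx]
  have hg₁_int : Integrable g₁ := hg₁_cont.integrable_of_hasCompactSupport hg₁_supp
  have hg₂_int : Integrable g₂ := hg₂_cont.integrable_of_hasCompactSupport hg₂_supp
  -- lower bound for |u| on the support
  obtain ⟨δ, hδpos, hδ⟩ : ∃ δ > 0, ∀ x ∈ tsupport ψ, δ ≤ |u x| := by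
    rcases (tsupport ψ).eq_empty_or_nonempty with h | h
    · exact ⟨1, one_pos, fun x hx => by simp [h] at hx⟩
    · obtain ⟨x₀, hx₀, hmin⟩ := hψc.exists_isMinOn h (hu.continuous.abs.continuousOn)
      exact ⟨|u x₀|, abs_pos.mpr (hune x₀ (hψO hx₀)), fun x hx => hmin hx⟩
  -- upper bound for |ψ|
  obtain ⟨M, hM1, hM⟩ : ∃ M, 1 ≤ M ∧ ∀ x, |ψ x| ≤ M := by
    obtain ⟨C, hC⟩ := hψ.continuous.abs.bounded_above_of_compact_support hψc.abs
    refine ⟨max C 1, le_max_right _ _, fun x => ?_⟩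
    have := hC x
    rw [Real.norm_eq_abs, abs_abs] at this
    exact this.trans (le_max_left _ _)
  have hMpos : (0:ℝ) < M := lt_of_lt_of_le one_pos hM1
  set t₀ : ℝ := δ / M with ht₀def
  have ht₀pos : 0 < t₀ := div_pos hδpos hMpos
  -- local expansion of G
  have hGeq : ∀ t : ℝ, |t| < t₀ → G t = (∫ x, g₁ x) * t + (∫ x, g₂ x) * t ^ 2 := by
    intro t ht
    rw [hG t]
    have hpt : ∀ x, (ε * ‖gradient u x + t • gradient ψ x‖ ^ 2
        - ε * ‖gradient u x‖ ^ 2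
        + ((u x + t * ψ x) ^ 2 - 2 * |u x + t * ψ x| + 1)
        - ((u x) ^ 2 - 2 * |u x| + 1)) = t * g₁ x + t ^ 2 * g₂ x := by
      intro x
      by_cases hx : x ∈ tsupport ψ
      · have h1 : ‖gradient u x + t • gradient ψ x‖ ^ 2
            = ‖gradient u x‖ ^ 2 + 2 * (t * ⟪gradient u x, gradient ψ x⟫)
              + t ^ 2 * ‖gradient ψ x‖ ^ 2 := by
          rw [norm_add_sq_real, real_inner_smul_right, norm_smul, mul_pow,
            Real.norm_eq_abs, sq_abs]
        have hsmall : |t * ψ x| < |u x| := by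
          rw [abs_mul]
          calc |t| * |ψ x| ≤ |t| * M := by
                exact mul_le_mul_of_nonneg_left (hM x) (abs_nonneg t)
            _ < t₀ * M := by exact mul_lt_mul_of_pos_right ht hMpos
            _ = δ := by rw [ht₀def, div_mul_cancel₀ δ hMpos.ne']
            _ ≤ |u x| := hδ x hx
        have h2 : |u x + t * ψ x| = |u x| + sgn (u x) * (t * ψ x) := sgn_abs_aux hsmall
        rw [h1, h2]
        simp only [hg₁def, hg₂def]
        ring
      · simp only [hg₁def, hg₂def, hgψ0 x hx]
        simp [hg₁def, hg₂def, hψ0 x hx, hgψ0 x hx]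
    rw [integral_congr_ae (ae_of_all _ hpt),
      integral_add (hg₁_int.const_mul t) (hg₂_int.const_mul (t ^ 2)),
      integral_const_mul, integral_const_mul]
    ring
  -- conclude
  set A : ℝ := ∫ x, g₁ x with hAdef
  set B : ℝ := ∫ x, g₂ x with hBdef
  have hlin : HasDerivAt (fun t : ℝ => A * t + B * t ^ 2) A 0 := by
    have h := ((hasDerivAt_id' (0:ℝ)).const_mul A).add ((hasDerivAt_pow 2 (0:ℝ)).const_mul B)
    exact h.congr_deriv (by simp)
  have hev : G =ᶠ[𝓝 (0:ℝ)] fun t => A * t + B * t ^ 2 := by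
    filter_upwards [Metric.ball_mem_nhds (0:ℝ) ht₀pos] with t hts
    rw [mem_ball_zero_iff, Real.norm_eq_abs] at hts
    exact hGeq t hts
  exact hlin.congr_of_eventuallyEq hev
end

section
/- Fix L ≥ 1, positive dimensions n_0 = d, n_1, …, n_{L−1}, and n_L = 1; for each k = 1, …, L let A_k : ℝ^{n_{k−1}} → ℝ^{n_k} be an affine map A_k(y) = W_k y + b_k given by a matrix W_k and vector b_k, and let ρ act on each ℝ^m coordinatewise by s ↦ max(s, 0) (the ReLU activation). Let f = A_L ∘ ρ ∘ A_{L−1} ∘ ⋯ ∘ ρ ∘ A_1 : ℝᵈ → ℝ be the resulting ReLU multilayer perceptron, and let Ω ⊆ ℝᵈ be a bounded open set. Then f is bounded on Ω and admits a weak gradient in L^∞: there exists a bounded measurable function g : Ω → ℝᵈ such that for every test function ψ on Ω and every i ∈ {1, …, d}, ∫_Ω f(x) · (∂ψ/∂x_i)(x) dμ(x) = −∫_Ω g_i(x) · ψ(x) dμ(x). In particular f and g belong to L^p(Ω) for every p ∈ [1, ∞]. -/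
open MeasureTheory
open scoped ENNReal

/-- A ReLU multilayer perceptron from `ℝⁿ` to `ℝᵐ`: a final affine layer,
possibly preceded by affine layers each followed by the coordinatewise
ReLU activation `s ↦ max s 0`. -/
inductive MLP : ℕ → ℕ → Type
  | last {n m : ℕ} (W : Matrix (Fin m) (Fin n) ℝ) (b : Fin m → ℝ) : MLP n m
  | layer {n k m : ℕ} (W : Matrix (Fin k) (Fin n) ℝ) (b : Fin k → ℝ) (rest : MLP k m) : MLP n m

/-- Evaluation of a ReLU multilayer perceptron. -/
noncomputable def MLP.eval : {n m : ℕ} → MLP n m → (Fin n → ℝ) → (Fin m → ℝ)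
  | _, _, .last W b, y => W.mulVec y + b
  | _, _, .layer W b rest, y => rest.eval (fun i => max ((W.mulVec y + b) i) 0)

lemma relu_lip (k : ℕ) : LipschitzWith 1 (fun v : Fin k → ℝ => fun i => max (v i) 0) := by
  apply LipschitzWith.of_dist_le_mul
  intro v w
  rw [NNReal.coe_one, one_mul]
  rcases isEmpty_or_nonempty (Fin k) with h | h
  · simp [dist_pi_def]
  apply (dist_pi_le_iff dist_nonneg).2
  intro i
  calc dist (max (v i) 0) (max (w i) 0) ≤ |v i - w i| := by
        rw [Real.dist_eq]; exact abs_max_sub_max_le_abs _ _ _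
    _ ≤ dist v w := by rw [← Real.dist_eq]; exact dist_le_pi_dist v w i

lemma affine_lip {n m : ℕ} (W : Matrix (Fin m) (Fin n) ℝ) (b : Fin m → ℝ) :
    ∃ K : NNReal, LipschitzWith K (fun y => W.mulVec y + b) := by
  let T := LinearMap.toContinuousLinearMap (Matrix.mulVecLin W)
  refine ⟨‖T‖₊, ?_⟩
  have : (fun y => W.mulVec y + b) = (fun z => z + b) ∘ T := by
    ext y i; simp [T]
  rw [this]
  exact (LipschitzWith.comp (by simpa using (isometry_add_right b).lipschitz) T.lipschitz).weaken
    (by simp)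

lemma mlp_lip : ∀ {n m : ℕ} (net : MLP n m), ∃ K : NNReal, LipschitzWith K net.eval := by
  intro n m net
  induction net with
  | last W b => exact affine_lip W b
  | layer W b rest ih =>
    obtain ⟨K, hK⟩ := ih
    obtain ⟨K', hK'⟩ := affine_lip W b
    exact ⟨K * (1 * K'), (hK.comp ((relu_lip _).comp hK') : )⟩

lemma proj0_lip : LipschitzWith 1 (fun v : Fin 1 → ℝ => v 0) := by
  apply LipschitzWith.of_dist_le_mul
  intro v w
  rw [NNReal.coe_one, one_mul]
  exact dist_le_pi_dist v w 0

lemma f_lip {d : ℕ} (net : MLP d 1) (f : EuclideanSpace ℝ (Fin d) → ℝ)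
    (hf : ∀ x, f x = net.eval (fun i => x i) 0) :
    ∃ K : NNReal, LipschitzWith K f := by
  obtain ⟨K, hK⟩ := mlp_lip net
  let T := (PiLp.continuousLinearEquiv 2 ℝ (fun _ : Fin d => ℝ)).toContinuousLinearMap
  refine ⟨1 * (K * ‖T‖₊), ?_⟩
  have : f = (fun v : Fin 1 → ℝ => v 0) ∘ net.eval ∘ T := by
    ext x; simp [hf x]; rfl
  rw [this]
  exact proj0_lip.comp (hK.comp T.lipschitz)

theorem stmt7 {d : ℕ} (net : MLP d 1)
    (f : EuclideanSpace ℝ (Fin d) → ℝ)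
    (hf : ∀ x, f x = net.eval (fun i => x i) 0)
    (Ω : Set (EuclideanSpace ℝ (Fin d))) (hΩ : IsOpen Ω) (hΩb : Bornology.IsBounded Ω) :
    (∃ C : ℝ, ∀ x ∈ Ω, |f x| ≤ C) ∧
    ∃ g : EuclideanSpace ℝ (Fin d) → EuclideanSpace ℝ (Fin d),
      Measurable g ∧ (∃ C : ℝ, ∀ x ∈ Ω, ‖g x‖ ≤ C) ∧
      (∀ ψ : EuclideanSpace ℝ (Fin d) → ℝ, ContDiff ℝ (⊤ : ℕ∞) ψ → HasCompactSupport ψ →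
        tsupport ψ ⊆ Ω → ∀ i : Fin d,
          ∫ x in Ω, f x * fderiv ℝ ψ x (EuclideanSpace.single i 1) =
            -∫ x in Ω, g x i * ψ x) ∧
      (∀ p : ℝ≥0∞, 1 ≤ p → MemLp f p (volume.restrict Ω) ∧ MemLp g p (volume.restrict Ω)) := by
  classical
  obtain ⟨K, hK⟩ := f_lip net f hf
  have hfc : Continuous f := hK.continuous
  have hmeasΩ : MeasurableSet Ω := hΩ.measurableSet
  obtain ⟨C₀, hC₀⟩ := hΩb.isCompact_closure.exists_bound_of_continuousOn hfc.continuousOn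
  refine ⟨⟨C₀, fun x hx => by
      simpa [Real.norm_eq_abs] using hC₀ x (subset_closure hx)⟩, ?_⟩
  set g : EuclideanSpace ℝ (Fin d) → EuclideanSpace ℝ (Fin d) :=
    fun x => WithLp.toLp 2 (fun i => fderiv ℝ f x (EuclideanSpace.single i 1)) with hgdef
  have hgm : Measurable g := by
    refine (WithLp.measurable_toLp 2 (Fin d → ℝ)).comp
      (measurable_pi_lambda (fun x i => fderiv ℝ f x (EuclideanSpace.single i 1)) ?_)
    intro i
    show Measurable fun x => fderiv ℝ f x (EuclideanSpace.single i 1)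
    exact measurable_fderiv_apply_const (𝕜 := ℝ) (f := f) (EuclideanSpace.single i 1)
  have hgi : ∀ x i, ‖g x i‖ ≤ (K : ℝ) := by
    intro x i
    calc ‖g x i‖ ≤ ‖fderiv ℝ f x‖ * ‖EuclideanSpace.single i (1:ℝ)‖ :=
          ContinuousLinearMap.le_opNorm (fderiv ℝ f x) (EuclideanSpace.single i (1:ℝ))
      _ = ‖fderiv ℝ f x‖ := by rw [EuclideanSpace.norm_single]; simp
      _ ≤ K := norm_fderiv_le_of_lipschitz ℝ hK
  have hgb : ∀ x, ‖g x‖ ≤ Real.sqrt d * K := by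
    intro x
    rw [EuclideanSpace.norm_eq]
    calc Real.sqrt (∑ i, ‖g x i‖ ^ 2) ≤ Real.sqrt (∑ _i : Fin d, (K:ℝ) ^ 2) := by
          apply Real.sqrt_le_sqrt
          apply Finset.sum_le_sum
          intro i _
          exact pow_le_pow_left₀ (norm_nonneg _) (hgi x i) 2
      _ = Real.sqrt (d * (K:ℝ)^2) := by rw [Finset.sum_const]; simp [mul_comm]
      _ = Real.sqrt d * K := by
          rw [Real.sqrt_mul (Nat.cast_nonneg d), Real.sqrt_sq (NNReal.coe_nonneg K)]
  refine ⟨g, hgm, ⟨Real.sqrt d * K, fun x _ => hgb x⟩, ?_, ?_⟩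
  · -- the weak derivative identity
    intro ψ hψ hψc hψΩ i
    set v : EuclideanSpace ℝ (Fin d) := EuclideanSpace.single i 1 with hv
    have hvn : ‖v‖ = 1 := by rw [hv, EuclideanSpace.norm_single]; simp
    have hψd : Differentiable ℝ ψ := hψ.differentiable (by simp)
    have h1 : ∫ x in Ω, f x * fderiv ℝ ψ x v = ∫ x, f x * fderiv ℝ ψ x v := by
      apply setIntegral_eq_integral_of_forall_compl_eq_zero
      intro x hx
      have hx' : x ∉ tsupport ψ := fun h => hx (hψΩ h)
      have : fderiv ℝ ψ x = 0 := by
        by_contra h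
        exact hx' (support_fderiv_subset ℝ (by simpa [Function.mem_support] using h))
      rw [this]; simp
    have h2 : ∫ x in Ω, g x i * ψ x = ∫ x, g x i * ψ x := by
      apply setIntegral_eq_integral_of_forall_compl_eq_zero
      intro x hx
      rw [image_eq_zero_of_notMem_tsupport (fun h => hx (hψΩ h)), mul_zero]
    rw [h1, h2]
    -- whole space identity
    obtain ⟨Lψ, hLψ⟩ := ContDiff.lipschitzWith_of_hasCompactSupport hψc hψ (by simp)
    set Kc : Set (EuclideanSpace ℝ (Fin d)) := Metric.cthickening 1 (tsupport ψ) with hKc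
    have hKcc : IsCompact Kc := hψc.cthickening
    obtain ⟨Mf, hMf⟩ := hKcc.exists_bound_of_continuousOn hfc.continuousOn
    have int_fψ : Integrable (fun x => f x * ψ x) :=
      (hfc.mul hψ.continuous).integrable_of_hasCompactSupport hψc.mul_left
    have key : ∀ t : ℝ, t ≠ 0 →
        ∫ x, f x * ((ψ (x + t • v) - ψ x) / t) = ∫ x, ((f (x - t • v) - f x) / t) * ψ x := by
      intro t ht
      have hc1 : Continuous fun x : EuclideanSpace ℝ (Fin d) => ψ (x + t • v) :=
        hψ.continuous.comp (continuous_id.add continuous_const)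
      have i1 : Integrable (fun x => f x * ψ (x + t • v)) := by
        apply (hfc.mul hc1).integrable_of_hasCompactSupport
        exact (hψc.comp_homeomorph (Homeomorph.addRight (t • v))).mul_left
      have i3 : Integrable (fun x => f (x - t • v) * ψ x) := by
        apply Continuous.integrable_of_hasCompactSupport
        · exact (hfc.comp (continuous_id.sub continuous_const)).mul hψ.continuous
        · exact hψc.mul_left
      have tr : ∫ x, f x * ψ (x + t • v) = ∫ x, f (x - t • v) * ψ x := by
        have := integral_add_right_eq_self (μ := volume)
          (fun x : EuclideanSpace ℝ (Fin d) => f (x - t • v) * ψ x) (t • v)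
        rw [← this]
        congr 1
        ext x
        simp
      calc ∫ x, f x * ((ψ (x + t • v) - ψ x) / t)
          = ∫ x, t⁻¹ * (f x * ψ (x + t • v) - f x * ψ x) := by
            congr 1; ext x; ring
        _ = t⁻¹ * ∫ x, (f x * ψ (x + t • v) - f x * ψ x) := integral_const_mul _ _
        _ = t⁻¹ * ((∫ x, f x * ψ (x + t • v)) - ∫ x, f x * ψ x) := by
            rw [integral_sub i1 int_fψ]
        _ = t⁻¹ * ((∫ x, f (x - t • v) * ψ x) - ∫ x, f x * ψ x) := by rw [tr]
        _ = t⁻¹ * ∫ x, (f (x - t • v) * ψ x - f x * ψ x) := by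
            rw [integral_sub i3 int_fψ]
        _ = ∫ x, t⁻¹ * (f (x - t • v) * ψ x - f x * ψ x) := (integral_const_mul _ _).symm
        _ = ∫ x, ((f (x - t • v) - f x) / t) * ψ x := by
            congr 1; ext x; ring
    have hsmall : ∀ᶠ t : ℝ in nhdsWithin 0 {(0:ℝ)}ᶜ, |t| ≤ 1 := by
      apply Filter.Eventually.filter_mono nhdsWithin_le_nhds
      have : Metric.closedBall (0:ℝ) 1 ∈ nhds (0:ℝ) := Metric.closedBall_mem_nhds 0 one_pos
      filter_upwards [this] with t ht
      simpa [Real.dist_eq] using ht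
    have lim1 : Filter.Tendsto (fun t : ℝ => ∫ x, f x * ((ψ (x + t • v) - ψ x) / t))
        (nhdsWithin 0 {(0:ℝ)}ᶜ) (nhds (∫ x, f x * fderiv ℝ ψ x v)) := by
      apply tendsto_integral_filter_of_dominated_convergence
        (Kc.indicator (fun _ => Mf * Lψ))
      · apply Filter.Eventually.of_forall
        intro t
        exact ((hfc.mul (((hψ.continuous.comp (continuous_id.add continuous_const)).sub
          hψ.continuous).div_const t))).aestronglyMeasurable
      · filter_upwards [hsmall, eventually_mem_nhdsWithin] with t ht ht0
        apply Filter.Eventually.of_forall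
        intro x
        by_cases hx : x ∈ Kc
        · rw [Set.indicator_of_mem hx]
          have hψb : |ψ (x + t • v) - ψ x| ≤ Lψ * |t| := by
            have := hLψ.dist_le_mul (x + t • v) x
            rw [Real.dist_eq] at this
            apply this.trans
            have : dist (x + t • v) x = |t| := by
              rw [dist_eq_norm]
              simp [norm_smul, hvn, Real.norm_eq_abs]
            rw [this]
          have ht0' : (0:ℝ) < |t| := abs_pos.2 (by simpa using ht0)
          rw [Real.norm_eq_abs, abs_mul, abs_div]
          have hdd : |ψ (x + t • v) - ψ x| / |t| ≤ Lψ := by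
            rw [div_le_iff₀ ht0']
            simpa [mul_comm] using hψb
          calc |f x| * (|ψ (x + t • v) - ψ x| / |t|)
              ≤ |f x| * Lψ := mul_le_mul_of_nonneg_left hdd (abs_nonneg _)
            _ ≤ Mf * Lψ := by
                apply mul_le_mul_of_nonneg_right _ (NNReal.coe_nonneg Lψ)
                simpa [Real.norm_eq_abs] using hMf x hx
        · rw [Set.indicator_of_notMem hx]
          have hx1 : ψ x = 0 := by
            apply image_eq_zero_of_notMem_tsupport
            exact fun h => hx (Metric.self_subset_cthickening _ h)
          have hx2 : ψ (x + t • v) = 0 := by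
            apply image_eq_zero_of_notMem_tsupport
            intro h
            apply hx
            apply Metric.mem_cthickening_of_dist_le x (x + t • v) 1 _ h
            rw [dist_eq_norm]
            have hxx : x - (x + t • v) = -(t • v) := by abel
            rw [hxx, norm_neg, norm_smul, hvn, Real.norm_eq_abs, mul_one]
            exact ht
          simp [hx1, hx2]
      · rw [integrable_indicator_iff hKcc.measurableSet]
        exact integrableOn_const hKcc.measure_lt_top.ne
      · apply Filter.Eventually.of_forall
        intro x
        have hD : HasLineDerivAt ℝ ψ (fderiv ℝ ψ x v) x v := (hψd x).hasFDerivAt.hasLineDerivAt v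
        have := hasDerivAt_iff_tendsto_slope.1 hD
        have heq : slope (fun s : ℝ => ψ (x + s • v)) (0:ℝ) =
            fun t : ℝ => (ψ (x + t • v) - ψ x) / t := by
          funext t
          rw [slope_def_field]
          simp
        rw [heq] at this
        simpa using this.const_mul (f x)
    have lim2 : Filter.Tendsto (fun t : ℝ => ∫ x, ((f (x - t • v) - f x) / t) * ψ x)
        (nhdsWithin 0 {(0:ℝ)}ᶜ) (nhds (∫ x, -(g x i) * ψ x)) := by
      apply tendsto_integral_filter_of_dominated_convergence
        (fun x => (K : ℝ) * |ψ x|)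
      · apply Filter.Eventually.of_forall
        intro t
        exact (((hfc.comp (continuous_id.sub continuous_const)).sub hfc).div_const t).mul
          hψ.continuous |>.aestronglyMeasurable
      · filter_upwards [eventually_mem_nhdsWithin] with t ht0
        apply Filter.Eventually.of_forall
        intro x
        have ht0' : (0:ℝ) < |t| := abs_pos.2 (by simpa using ht0)
        have hfb : |f (x - t • v) - f x| ≤ K * |t| := by
          have := hK.dist_le_mul (x - t • v) x
          rw [Real.dist_eq] at this
          apply this.trans
          have : dist (x - t • v) x = |t| := by
            rw [dist_eq_norm]
            simp [norm_smul, hvn, Real.norm_eq_abs]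
          rw [this]
        rw [Real.norm_eq_abs, abs_mul, abs_div]
        apply mul_le_mul_of_nonneg_right _ (abs_nonneg _)
        rw [div_le_iff₀ ht0']
        simpa [mul_comm] using hfb
      · exact (hψ.continuous.integrable_of_hasCompactSupport hψc).abs.const_mul _
      · have hae : ∀ᵐ x : EuclideanSpace ℝ (Fin d) ∂volume, DifferentiableAt ℝ f x :=
          hK.ae_differentiableAt
        filter_upwards [hae] with x hx
        have hD : HasLineDerivAt ℝ f (fderiv ℝ f x (-v)) x (-v) :=
          hx.hasFDerivAt.hasLineDerivAt (-v)
        have := hasDerivAt_iff_tendsto_slope.1 hD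
        have heq : slope (fun s : ℝ => f (x + s • (-v))) (0:ℝ) =
            fun t : ℝ => (f (x - t • v) - f x) / t := by
          funext t
          rw [slope_def_field]
          simp [smul_neg, sub_eq_add_neg]
        rw [heq] at this
        have hval : fderiv ℝ f x (-v) = -(g x i) := by
          rw [map_neg]
        rw [hval] at this
        simpa using this.mul_const (ψ x)
    have lim1' : Filter.Tendsto (fun t : ℝ => ∫ x, f x * ((ψ (x + t • v) - ψ x) / t))
        (nhdsWithin 0 {(0:ℝ)}ᶜ) (nhds (∫ x, -(g x i) * ψ x)) := by
      apply lim2.congr'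
      filter_upwards [eventually_mem_nhdsWithin] with t ht0
      exact (key t (by simpa using ht0)).symm
    have := tendsto_nhds_unique lim1 lim1'
    rw [this]
    simp only [neg_mul]
    exact integral_neg _
  · -- Memℒp
    intro p hp
    haveI hfin : IsFiniteMeasure (volume.restrict Ω) :=
      ⟨by rw [Measure.restrict_apply_univ]; exact hΩb.measure_lt_top⟩
    constructor
    · refine (memLp_top_of_bound hfc.aestronglyMeasurable.restrict C₀ ?_).mono_exponent
        le_top
      rw [ae_restrict_iff' hmeasΩ]
      exact Filter.Eventually.of_forall fun x hx => hC₀ x (subset_closure hx)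
    · refine (memLp_top_of_bound (hgm.aestronglyMeasurable.restrict) (Real.sqrt d * K)
        ?_).mono_exponent le_top
      exact Filter.Eventually.of_forall fun x => hgb x
end

section
/- Let f : ℝᵈ → ℝ be a Lipschitz function. Then f is differentiable at Lebesgue-almost every point of ℝᵈ, and for every test function ψ : ℝᵈ → ℝ (smooth with compact support) and every vector v ∈ ℝᵈ, the integration-by-parts identity holds: ∫_{ℝᵈ} f(x) · (Dψ(x))(v) dμ(x) = −∫_{ℝᵈ} (Df(x))(v) · ψ(x) dμ(x), where Dψ(x) and Df(x) denote the Fréchet derivatives (Df(x) being defined almost everywhere; on the null set where f is not differentiable the integrand may be given any value, e.g. 0). -/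
open MeasureTheory Filter Topology

theorem stmt8 {d : ℕ} (f : EuclideanSpace ℝ (Fin d) → ℝ)
    (K : NNReal) (hf : LipschitzWith K f) :
    (∀ᵐ x ∂(volume : Measure (EuclideanSpace ℝ (Fin d))), DifferentiableAt ℝ f x) ∧
    ∀ ψ : EuclideanSpace ℝ (Fin d) → ℝ, ContDiff ℝ (⊤ : ℕ∞) ψ → HasCompactSupport ψ →
      ∀ v : EuclideanSpace ℝ (Fin d),
        ∫ x, f x * fderiv ℝ ψ x v = -∫ x, fderiv ℝ f x v * ψ x := by
  refine ⟨hf.ae_differentiableAt, ?_⟩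
  intro ψ hψ hψc v

  have hfc : Continuous f := hf.continuous
  have hψd : Differentiable ℝ ψ := hψ.differentiable (by simp)
  have hψcont : Continuous ψ := hψd.continuous
  -- bound on the derivative of ψ
  obtain ⟨M, hM⟩ : ∃ M, ∀ x : (EuclideanSpace ℝ (Fin d)), ‖fderiv ℝ ψ x‖ ≤ M :=
    (hψc.fderiv ℝ).exists_bound_of_continuous (hψ.continuous_fderiv (by simp))
  have hψlip : ∀ a b : (EuclideanSpace ℝ (Fin d)), |ψ a - ψ b| ≤ M * ‖a - b‖ := by
    intro a b
    have := Convex.norm_image_sub_le_of_norm_fderiv_le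
      (fun x _ => hψd x) (fun x _ => hM x) convex_univ (Set.mem_univ b) (Set.mem_univ a)
    simpa [Real.norm_eq_abs] using this
  have hM0 : 0 ≤ M := le_trans (norm_nonneg _) (hM 0)
  -- key identity for every t ≠ 0, via translation invariance
  have key : ∀ t : ℝ, t ≠ 0 →
      ∫ x : (EuclideanSpace ℝ (Fin d)), f x * ((ψ (x + t • v) - ψ x) / t)
        = ∫ x : (EuclideanSpace ℝ (Fin d)), ((f (x - t • v) - f x) / t) * ψ x := by
    intro t ht
    have hψt : Continuous fun x : (EuclideanSpace ℝ (Fin d)) => ψ (x + t • v) :=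
      hψcont.comp (continuous_id.add continuous_const)
    have hψtc : HasCompactSupport fun x : (EuclideanSpace ℝ (Fin d)) => ψ (x + t • v) :=
      hψc.comp_homeomorph (Homeomorph.addRight (t • v))
    have I1 : Integrable (fun x : (EuclideanSpace ℝ (Fin d)) => f x * ψ (x + t • v)) volume :=
      (hfc.mul hψt).integrable_of_hasCompactSupport hψtc.mul_left
    have I2 : Integrable (fun x : (EuclideanSpace ℝ (Fin d)) => f x * ψ x) volume :=
      (hfc.mul hψcont).integrable_of_hasCompactSupport hψc.mul_left
    have I3 : Integrable (fun x : (EuclideanSpace ℝ (Fin d)) => f (x - t • v) * ψ x) volume :=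
      ((hfc.comp (continuous_id.sub continuous_const)).mul
        hψcont).integrable_of_hasCompactSupport hψc.mul_left
    have T : ∫ x : (EuclideanSpace ℝ (Fin d)), f x * ψ (x + t • v) = ∫ x : (EuclideanSpace ℝ (Fin d)), f (x - t • v) * ψ x := by
      rw [← integral_add_right_eq_self (μ := (volume : Measure (EuclideanSpace ℝ (Fin d))))
        (fun x : (EuclideanSpace ℝ (Fin d)) => f (x - t • v) * ψ x) (t • v)]
      simp
    calc ∫ x : (EuclideanSpace ℝ (Fin d)), f x * ((ψ (x + t • v) - ψ x) / t)
        = ∫ x : (EuclideanSpace ℝ (Fin d)), (f x * ψ (x + t • v)) / t - (f x * ψ x) / t := by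
          congr 1; funext x; ring
      _ = (∫ x : (EuclideanSpace ℝ (Fin d)), f x * ψ (x + t • v)) / t - (∫ x : (EuclideanSpace ℝ (Fin d)), f x * ψ x) / t := by
          rw [integral_sub (I1.div_const t) (I2.div_const t), integral_div, integral_div]
      _ = (∫ x : (EuclideanSpace ℝ (Fin d)), f (x - t • v) * ψ x) / t - (∫ x : (EuclideanSpace ℝ (Fin d)), f x * ψ x) / t := by rw [T]
      _ = ∫ x : (EuclideanSpace ℝ (Fin d)), ((f (x - t • v) - f x) / t) * ψ x := by
          rw [← integral_div, ← integral_div, ← integral_sub (I3.div_const t) (I2.div_const t)]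
          congr 1; funext x; ring
  -- sequence of difference quotients
  set t : ℕ → ℝ := fun n => 1 / (n + 1) with ht_def
  have htpos : ∀ n, 0 < t n := fun n => by positivity
  have htne : ∀ n, t n ≠ 0 := fun n => (htpos n).ne'
  have htle : ∀ n, |t n| ≤ 1 := by
    intro n
    rw [abs_of_pos (htpos n)]
    rw [div_le_one (by positivity)]
    simp
  have ht0 : Tendsto t atTop (𝓝 0) := tendsto_one_div_add_atTop_nhds_zero_nat
  have ht0' : Tendsto t atTop (𝓝[≠] 0) :=
    tendsto_nhdsWithin_of_tendsto_nhds_of_eventually_within _ ht0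
      (Eventually.of_forall fun n => htne n)
  -- compact set containing the supports
  set S : Set (EuclideanSpace ℝ (Fin d)) := tsupport ψ with hS_def
  set K1 : Set (EuclideanSpace ℝ (Fin d)) := Metric.cthickening ‖v‖ S with hK1_def
  have hK1c : IsCompact K1 := hψc.cthickening
  obtain ⟨Cf, hCf, hCf0⟩ : ∃ Cf, (∀ x ∈ K1, |f x| ≤ Cf) ∧ 0 ≤ Cf := by
    obtain ⟨Cf, hCf⟩ := hK1c.exists_bound_of_continuousOn hfc.continuousOn
    exact ⟨Cf ⊔ 0, fun x hx => le_trans (by simpa [Real.norm_eq_abs] using hCf x hx) le_sup_left,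
      le_sup_right⟩
  -- membership facts
  have hmem : ∀ (s : ℝ), |s| ≤ 1 → ∀ x : (EuclideanSpace ℝ (Fin d)), x ∉ K1 → ψ x = 0 ∧ ψ (x + s • v) = 0 := by
    intro s hs x hx
    constructor
    · by_contra h
      exact hx (Metric.self_subset_cthickening S (subset_tsupport ψ (by simpa using h)))
    · by_contra h
      apply hx
      have hmem2 : x + s • v ∈ S := subset_tsupport ψ (by simpa using h)
      refine Metric.mem_cthickening_of_dist_le x (x + s • v) ‖v‖ S hmem2 ?_
      rw [dist_eq_norm]
      have hxx : x - (x + s • v) = -(s • v) := by abel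
      rw [hxx, norm_neg, norm_smul]
      calc ‖s‖ * ‖v‖ ≤ 1 * ‖v‖ := by
            apply mul_le_mul_of_nonneg_right _ (norm_nonneg v)
            simpa [Real.norm_eq_abs] using hs
        _ = ‖v‖ := one_mul _
  -- bound function
  set g : (EuclideanSpace ℝ (Fin d)) → ℝ := K1.indicator (fun _ => Cf * (M * ‖v‖)) with hg_def
  have hgint : Integrable g volume := by
    apply (integrable_indicator_iff hK1c.measurableSet).2
    exact integrableOn_const hK1c.measure_lt_top.ne
  -- LHS limit
  have lim1 : Tendsto (fun n => ∫ x : (EuclideanSpace ℝ (Fin d)), f x * ((ψ (x + t n • v) - ψ x) / t n)) atTop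
      (𝓝 (∫ x : (EuclideanSpace ℝ (Fin d)), f x * fderiv ℝ ψ x v)) := by
    apply tendsto_integral_of_dominated_convergence g
    · intro n
      apply Continuous.aestronglyMeasurable
      fun_prop
    · exact hgint
    · intro n
      refine Eventually.of_forall fun x => ?_
      by_cases hx : x ∈ K1
      · have h1 : |f x| ≤ Cf := hCf x hx
        have h2 : |(ψ (x + t n • v) - ψ x) / t n| ≤ M * ‖v‖ := by
          rw [abs_div]
          rw [div_le_iff₀ (abs_pos.2 (htne n))]
          calc |ψ (x + t n • v) - ψ x| ≤ M * ‖x + t n • v - x‖ := hψlip _ _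
            _ = M * (‖v‖ * |t n|) := by
                rw [add_sub_cancel_left, norm_smul, Real.norm_eq_abs]; ring
            _ = M * ‖v‖ * |t n| := by ring
        calc ‖f x * ((ψ (x + t n • v) - ψ x) / t n)‖
            = |f x| * |(ψ (x + t n • v) - ψ x) / t n| := abs_mul _ _
          _ ≤ Cf * (M * ‖v‖) := mul_le_mul h1 h2 (abs_nonneg _)
              hCf0
          _ = g x := by rw [hg_def, Set.indicator_of_mem hx]
      · obtain ⟨e1, e2⟩ := hmem (t n) (htle n) x hx
        simp [e1, e2, hg_def, Set.indicator_of_notMem hx]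
    · refine Eventually.of_forall fun x => ?_
      have hD : HasDerivAt (fun s : ℝ => ψ (x + s • v)) (fderiv ℝ ψ x v) 0 := by
        have h1 : HasDerivAt (fun s : ℝ => x + s • v) v 0 := by
          simpa using ((hasDerivAt_id (0 : ℝ)).smul_const v).const_add x
        have h2 : HasFDerivAt ψ (fderiv ℝ ψ (x + (0 : ℝ) • v)) (x + (0 : ℝ) • v) :=
          (hψd _).hasFDerivAt
        have := h2.comp_hasDerivAt 0 h1
        simpa [Function.comp_def] using this
      have hslope := hasDerivAt_iff_tendsto_slope.1 hD
      have := hslope.comp ht0'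
      refine Tendsto.congr (fun n => ?_) (this.const_mul (f x))
      simp only [Function.comp_apply, slope_def_field]
      simp
  -- RHS limit
  have lim2 : Tendsto (fun n => ∫ x : (EuclideanSpace ℝ (Fin d)), ((f (x - t n • v) - f x) / t n) * ψ x) atTop
      (𝓝 (∫ x : (EuclideanSpace ℝ (Fin d)), -(fderiv ℝ f x v) * ψ x)) := by
    apply tendsto_integral_of_dominated_convergence (fun x => (K : ℝ) * ‖v‖ * |ψ x|)
    · intro n
      apply Continuous.aestronglyMeasurable
      fun_prop
    · exact (hψcont.integrable_of_hasCompactSupport hψc).abs.const_mul _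
    · intro n
      refine Eventually.of_forall fun x => ?_
      have h1 : |(f (x - t n • v) - f x) / t n| ≤ (K : ℝ) * ‖v‖ := by
        rw [abs_div, div_le_iff₀ (abs_pos.2 (htne n))]
        calc |f (x - t n • v) - f x| ≤ (K : ℝ) * ‖x - t n • v - x‖ := by
              have := hf.dist_le_mul (x - t n • v) x
              simpa [Real.dist_eq, dist_eq_norm] using this
          _ = (K : ℝ) * (|t n| * ‖v‖) := by
              rw [sub_sub_cancel_left, norm_neg, norm_smul, Real.norm_eq_abs]
          _ = (K : ℝ) * ‖v‖ * |t n| := by ring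
      calc ‖(f (x - t n • v) - f x) / t n * ψ x‖
          = |(f (x - t n • v) - f x) / t n| * |ψ x| := abs_mul _ _
        _ ≤ (K : ℝ) * ‖v‖ * |ψ x| := mul_le_mul_of_nonneg_right h1 (abs_nonneg _)
    · filter_upwards [hf.ae_differentiableAt (μ := (volume : Measure (EuclideanSpace ℝ (Fin d))))] with x hx
      have hD : HasDerivAt (fun s : ℝ => f (x + s • (-v))) (-(fderiv ℝ f x v)) 0 := by
        have h1 : HasDerivAt (fun s : ℝ => x + s • (-v)) (-v) 0 := by
          simpa using ((hasDerivAt_id (0 : ℝ)).smul_const (-v)).const_add x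
        have h2 : HasFDerivAt f (fderiv ℝ f (x + (0 : ℝ) • (-v))) (x + (0 : ℝ) • (-v)) := by
          simpa using hx.hasFDerivAt
        have := h2.comp_hasDerivAt 0 h1
        simpa [map_neg, Function.comp_def] using this
      have hslope := hasDerivAt_iff_tendsto_slope.1 hD
      have := hslope.comp ht0'
      refine Tendsto.congr (fun n => ?_) (this.mul_const (ψ x))
      simp only [Function.comp_apply, slope_def_field]
      simp [sub_eq_add_neg, smul_neg]
  -- conclude
  have hEq : (fun n => ∫ x : (EuclideanSpace ℝ (Fin d)), f x * ((ψ (x + t n • v) - ψ x) / t n))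
      = fun n => ∫ x : (EuclideanSpace ℝ (Fin d)), ((f (x - t n • v) - f x) / t n) * ψ x := by
    funext n; exact key (t n) (htne n)
  rw [hEq] at lim1
  have := tendsto_nhds_unique lim1 lim2
  rw [this]
  simp [neg_mul, integral_neg]
end

section
/- Let Ω ⊆ ℝᵈ be a bounded open set and f : Ω → ℝ a continuous function. Suppose there are finitely many pairwise disjoint convex open sets Ω_1, …, Ω_K ⊆ Ω whose closures cover Ω (Ω ⊆ ∪_{k=1}^K cl(Ω_k)), and affine maps L_k(x) = ⟨a_k, x⟩ + b_k with a_k ∈ ℝᵈ, b_k ∈ ℝ, such that f(x) = L_k(x) for every x ∈ Ω_k. Define g : Ω → ℝᵈ by g(x) = a_k for x ∈ Ω_k and g(x) = 0 for x ∈ Ω \ ∪_k Ω_k. Then Ω \ ∪_k Ω_k has Lebesgue measure zero, and for every test function ψ on Ω and every i ∈ {1, …, d}: ∫_Ω f(x) · (∂ψ/∂x_i)(x) dμ(x) = −∫_Ω g_i(x) · ψ(x) dμ(x); that is, g is a weak gradient of f on Ω. -/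
open MeasureTheory Set
open scoped RealInnerProductSpace


open MeasureTheory Set

lemma oneDimFTC {u u' : ℝ → ℝ} {s : Set ℝ} (hs : s.Countable)
    (hu : Continuous u) (hcs : HasCompactSupport u)
    (hder : ∀ t ∉ s, HasDerivAt u (u' t) t)
    (hint : Integrable u' volume) : ∫ t, u' t = 0 := by
  obtain ⟨R, hR⟩ : ∃ R : ℝ, tsupport u ⊆ Icc (-R) R := by
    obtain ⟨R, hR⟩ := hcs.isBounded.subset_closedBall 0
    exact ⟨R, by simpa [Real.closedBall_eq_Icc] using hR⟩
  set R' : ℝ := max R 0 + 1 with hR'def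
  have hIcc : Icc (-R) R ⊆ Ioo (-R') R' := by
    apply Icc_subset_Ioo
    · have : R ≤ max R 0 := le_max_left _ _
      simp only [hR'def]; linarith
    · have : R ≤ max R 0 := le_max_left _ _
      simp only [hR'def]; linarith
  have hle : (-R') ≤ R' := by
    have : (0:ℝ) ≤ max R 0 := le_max_right _ _
    simp only [hR'def]; linarith
  have hnmem : ∀ t, t ∉ Ioo (-R') R' → t ∉ tsupport u := fun t ht hmem => ht (hIcc (hR hmem))
  have hu0 : ∀ t, t ∉ Ioo (-R') R' → u t = 0 := fun t ht =>
    image_eq_zero_of_notMem_tsupport (hnmem t ht)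
  have h0 : ∀ t, t ∉ s → t ∉ Ioo (-R') R' → u' t = 0 := by
    intro t hts ht
    have hev : u =ᶠ[nhds t] fun _ => (0:ℝ) := by
      filter_upwards [(isClosed_tsupport u).isOpen_compl.mem_nhds (hnmem t ht)] with y hy
      exact image_eq_zero_of_notMem_tsupport hy
    have : HasDerivAt u 0 t := (hasDerivAt_const t (0:ℝ)).congr_of_eventuallyEq hev
    exact (hder t hts).unique this
  have key : ∫ t, u' t = ∫ t in (-R')..R', u' t := by
    rw [intervalIntegral.integral_of_le hle, ← integral_indicator measurableSet_Ioc]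
    apply integral_congr_ae
    have hsnull : ∀ᵐ t : ℝ, t ∉ s := by
      rw [← measure_eq_zero_iff_ae_notMem]; exact hs.measure_zero volume
    filter_upwards [hsnull] with t hts
    by_cases ht : t ∈ Ioc (-R') R'
    · rw [indicator_of_mem ht]
    · rw [indicator_of_notMem ht]
      exact h0 t hts (fun h => ht (Ioo_subset_Ioc_self h))
  rw [key, MeasureTheory.integral_eq_of_hasDerivAt_off_countable_of_le u u' hle hs
    hu.continuousOn (fun t ht => hder t ht.2) hint.intervalIntegrable,
    hu0 R' (by simp), hu0 (-R') (by simp), sub_zero]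

open MeasureTheory Set

namespace Stmt9Aux

variable {n : ℕ}

noncomputable def Xmap (i : Fin (n+1)) (w : Fin n → ℝ) (t : ℝ) :
    EuclideanSpace ℝ (Fin (n+1)) :=
  WithLp.toLp 2 (i.insertNth t w)

lemma Xmap_self (i : Fin (n+1)) (w : Fin n → ℝ) (t : ℝ) : Xmap i w t i = t := by
  simp [Xmap]

lemma Xmap_succAbove (i : Fin (n+1)) (w : Fin n → ℝ) (t : ℝ) (j : Fin n) :
    Xmap i w t (i.succAbove j) = w j := by
  simp [Xmap]

noncomputable def pmap (i : Fin (n+1)) (x : EuclideanSpace ℝ (Fin (n+1))) : Fin n → ℝ :=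
  i.removeNth x

lemma Xmap_pmap (i : Fin (n+1)) (x : EuclideanSpace ℝ (Fin (n+1))) :
    Xmap i (pmap i x) (x i) = x := by
  unfold Xmap pmap
  rw [Fin.insertNth_self_removeNth]

lemma Xmap_affine (i : Fin (n+1)) (w : Fin n → ℝ) (t : ℝ) :
    Xmap i w t = Xmap i w 0 + t • EuclideanSpace.single i (1:ℝ) := by
  refine PiLp.ext fun j => ?_
  rw [PiLp.add_apply, PiLp.smul_apply]
  refine Fin.succAboveCases i ?_ ?_ j
  · simp [Xmap_self, EuclideanSpace.single_apply]
  · intro j'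
    simp [Xmap_succAbove, EuclideanSpace.single_apply, (Fin.succAbove_ne i j').symm,
      Fin.succAbove_ne i j']

lemma Xmap_hasDerivAt (i : Fin (n+1)) (w : Fin n → ℝ) (t : ℝ) :
    HasDerivAt (fun s => Xmap i w s) (EuclideanSpace.single i (1:ℝ)) t := by
  have h : (fun s => Xmap i w s)
      = fun s => Xmap i w 0 + s • EuclideanSpace.single i (1:ℝ) :=
    funext (Xmap_affine i w)
  rw [h]
  simpa using (((hasDerivAt_id t).smul_const (EuclideanSpace.single i (1:ℝ))).const_add
    (Xmap i w 0))

lemma Xmap_continuous_t (i : Fin (n+1)) (w : Fin n → ℝ) :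
    Continuous fun t => Xmap i w t := by
  have h : (fun s => Xmap i w s)
      = fun s => Xmap i w 0 + s • EuclideanSpace.single i (1:ℝ) :=
    funext (Xmap_affine i w)
  rw [h]; fun_prop

lemma Xmap_continuous_w (i : Fin (n+1)) (t : ℝ) :
    Continuous fun w : Fin n → ℝ => Xmap i w t := by
  have h : Continuous fun w : Fin n → ℝ => (i.insertNth t w : Fin (n+1) → ℝ) :=
    continuous_const.finInsertNth i continuous_id
  have h2 := Continuous.comp (PiLp.continuous_toLp 2 (fun _ : Fin (n+1) => ℝ)) h
  exact h2

lemma pmap_isLinear (i : Fin (n+1)) : IsLinearMap ℝ (pmap i) := by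
  constructor
  · intro x y; funext j; rw [pmap, Fin.removeNth]; rw [PiLp.add_apply]; rfl
  · intro c x; funext j; rw [pmap, Fin.removeNth]; rw [PiLp.smul_apply]; rfl

lemma pmap_continuous (i : Fin (n+1)) : Continuous (pmap i) := by
  apply continuous_pi
  intro j
  exact (continuous_apply (i.succAbove j)).comp (PiLp.continuous_ofLp 2 (fun _ : Fin (n+1) => ℝ))

lemma pmap_image_eq (i : Fin (n+1)) (S : Set (EuclideanSpace ℝ (Fin (n+1)))) :
    pmap i '' S = ⋃ t : ℝ, (fun w => Xmap i w t) ⁻¹' S := by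
  ext w
  constructor
  · rintro ⟨x, hxS, rfl⟩
    exact mem_iUnion.2 ⟨x i, by simpa [Xmap_pmap] using hxS⟩
  · rintro hw
    obtain ⟨t, ht⟩ := mem_iUnion.1 hw
    refine ⟨Xmap i w t, ht, ?_⟩
    funext j
    simp [pmap, Fin.removeNth, Xmap_succAbove]

lemma pmap_image_isOpen (i : Fin (n+1)) {S : Set (EuclideanSpace ℝ (Fin (n+1)))}
    (hS : IsOpen S) : IsOpen (pmap i '' S) := by
  rw [pmap_image_eq]
  exact isOpen_iUnion fun t => hS.preimage (Xmap_continuous_w i t)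

noncomputable def prodEquiv (i : Fin (n+1)) :
    EuclideanSpace ℝ (Fin (n+1)) ≃ᵐ ℝ × (Fin n → ℝ) :=
  (MeasurableEquiv.toLp 2 (Fin (n+1) → ℝ)).symm.trans
    (MeasurableEquiv.piFinSuccAbove (fun _ : Fin (n+1) => ℝ) i)

lemma prodEquiv_measurePreserving (i : Fin (n+1)) :
    MeasurePreserving (prodEquiv i) volume volume :=
  (EuclideanSpace.volume_preserving_symm_measurableEquiv_toLp (Fin (n+1))).trans
    (volume_preserving_piFinSuccAbove (fun _ : Fin (n+1) => ℝ) i)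

lemma prodEquiv_symm_apply (i : Fin (n+1)) (t : ℝ) (w : Fin n → ℝ) :
    (prodEquiv i).symm (t, w) = Xmap i w t := rfl

end Stmt9Aux


theorem stmt9 {d : ℕ} (Ω : Set (EuclideanSpace ℝ (Fin d))) (hΩ : IsOpen Ω)
    (hΩb : Bornology.IsBounded Ω)
    (f : EuclideanSpace ℝ (Fin d) → ℝ) (hf : ContinuousOn f Ω)
    (K : ℕ) (Ωs : Fin K → Set (EuclideanSpace ℝ (Fin d)))
    (hconv : ∀ k, Convex ℝ (Ωs k)) (hopen : ∀ k, IsOpen (Ωs k))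
    (hsub : ∀ k, Ωs k ⊆ Ω)
    (hdisj : Pairwise (Function.onFun Disjoint Ωs))
    (hcover : Ω ⊆ ⋃ k, closure (Ωs k))
    (a : Fin K → EuclideanSpace ℝ (Fin d)) (b : Fin K → ℝ)
    (haff : ∀ k, ∀ x ∈ Ωs k, f x = ⟪a k, x⟫ + b k)
    (g : EuclideanSpace ℝ (Fin d) → EuclideanSpace ℝ (Fin d))
    (hg1 : ∀ k, ∀ x ∈ Ωs k, g x = a k)
    (hg2 : ∀ x ∈ Ω \ ⋃ k, Ωs k, g x = 0) :
    volume (Ω \ ⋃ k, Ωs k) = 0 ∧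
    ∀ ψ : EuclideanSpace ℝ (Fin d) → ℝ, ContDiff ℝ (⊤ : ℕ∞) ψ → HasCompactSupport ψ →
      tsupport ψ ⊆ Ω → ∀ i : Fin d,
        ∫ x in Ω, f x * fderiv ℝ ψ x (EuclideanSpace.single i 1) =
          -∫ x in Ω, g x i * ψ x := by
  have hnull : volume (Ω \ ⋃ k, Ωs k) = 0 := by
    have hsubfr : Ω \ ⋃ k, Ωs k ⊆ ⋃ k, frontier (Ωs k) := by
      rintro x ⟨hxΩ, hxn⟩
      obtain ⟨k, hk⟩ : ∃ k, x ∈ closure (Ωs k) := by simpa using hcover hxΩ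
      refine mem_iUnion.2 ⟨k, ?_⟩
      rw [(hopen k).frontier_eq]
      exact ⟨hk, fun h => hxn (mem_iUnion.2 ⟨k, h⟩)⟩
    exact measure_mono_null hsubfr
      (measure_iUnion_null fun k => (hconv k).addHaar_frontier volume)
  refine ⟨hnull, ?_⟩
  intro ψ hψ hψc hψsupp i
  obtain ⟨n, rfl⟩ : ∃ n, d = n + 1 := ⟨d - 1, by have := i.pos; omega⟩
  set v : EuclideanSpace ℝ (Fin (n+1)) := EuclideanSpace.single i (1:ℝ) with hv
  have hψd : Differentiable ℝ ψ := hψ.differentiable (by simp)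
  have hψcont : Continuous ψ := hψd.continuous
  have hψzero : ∀ x, x ∉ tsupport ψ → ψ x = 0 := fun x hx =>
    image_eq_zero_of_notMem_tsupport hx
  have hfzero : ∀ x, x ∉ tsupport ψ → fderiv ℝ ψ x = 0 := by
    intro x hx
    have h1 : x ∉ Function.support (fderiv ℝ ψ) := fun h => hx (support_fderiv_subset ℝ h)
    exact Function.notMem_support.mp h1
  set G : EuclideanSpace ℝ (Fin (n+1)) → ℝ :=
    fun x => ∑ k : Fin K, (Ωs k).indicator (fun _ => a k i) x with hGdef
  have hGk : ∀ k, ∀ x ∈ Ωs k, G x = a k i := by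
    intro k x hk
    rw [hGdef]
    dsimp only
    rw [Finset.sum_eq_single k]
    · exact indicator_of_mem hk _
    · intro j _ hjk
      exact indicator_of_notMem (fun hj => Set.disjoint_left.mp (hdisj hjk) hj hk) _
    · intro h; exact absurd (Finset.mem_univ k) h
  have hG0 : ∀ x, (∀ k, x ∉ Ωs k) → G x = 0 := by
    intro x hx
    rw [hGdef]
    exact Finset.sum_eq_zero fun k _ => indicator_of_notMem (hx k) _
  set Φ : EuclideanSpace ℝ (Fin (n+1)) → ℝ := fun x => f x * ψ x with hΦdef
  set Φ' : EuclideanSpace ℝ (Fin (n+1)) → ℝ :=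
    fun x => f x * fderiv ℝ ψ x v + G x * ψ x with hΦ'def
  have hΦcont : Continuous Φ := by
    rw [continuous_iff_continuousAt]
    intro x
    by_cases hx : x ∈ Ω
    · exact (hf.continuousAt (hΩ.mem_nhds hx)).mul hψcont.continuousAt
    · have hx' : x ∉ tsupport ψ := fun h => hx (hψsupp h)
      have hev : Φ =ᶠ[nhds x] fun _ => 0 := by
        filter_upwards [(isClosed_tsupport ψ).isOpen_compl.mem_nhds hx'] with y hy
        simp only [hΦdef, hψzero y hy, mul_zero]
      exact continuousAt_const.congr hev.symm
  have hD1cont : Continuous fun x => f x * fderiv ℝ ψ x v := by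
    rw [continuous_iff_continuousAt]
    intro x
    by_cases hx : x ∈ Ω
    · exact (hf.continuousAt (hΩ.mem_nhds hx)).mul
        (((hψ.continuous_fderiv (by simp)).clm_apply continuous_const).continuousAt)
    · have hx' : x ∉ tsupport ψ := fun h => hx (hψsupp h)
      have hev : (fun x => f x * fderiv ℝ ψ x v) =ᶠ[nhds x] fun _ => 0 := by
        filter_upwards [(isClosed_tsupport ψ).isOpen_compl.mem_nhds hx'] with y hy
        simp only [hfzero y hy, ContinuousLinearMap.zero_apply, mul_zero]
      exact continuousAt_const.congr hev.symm
  have hD1int : Integrable (fun x => f x * fderiv ℝ ψ x v) volume :=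
    hD1cont.integrable_of_hasCompactSupport
      (HasCompactSupport.intro hψc fun x hx => by
        simp only [hfzero x hx, ContinuousLinearMap.zero_apply, mul_zero])
  have hGmeas : Measurable G := by
    rw [hGdef]
    exact Finset.measurable_sum _ fun k _ =>
      (measurable_const.indicator (hopen k).measurableSet)
  set C : ℝ := ∑ k : Fin K, |a k i| with hCdef
  have hGbound : ∀ x, |G x| ≤ C := by
    intro x
    rw [hGdef, hCdef]
    refine (Finset.abs_sum_le_sum_abs _ _).trans (Finset.sum_le_sum fun k _ => ?_)
    by_cases hx : x ∈ Ωs k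
    · rw [indicator_of_mem hx]
    · rw [indicator_of_notMem hx]; simp
  have hboundint : Integrable (fun x => C * |ψ x|) volume :=
    (continuous_const.mul hψcont.abs).integrable_of_hasCompactSupport
      (HasCompactSupport.intro hψc fun x hx => by simp [hψzero x hx])
  have hD2int : Integrable (fun x => G x * ψ x) volume := by
    refine Integrable.mono' hboundint
      ((hGmeas.mul hψcont.measurable).aestronglyMeasurable) ?_
    refine Filter.Eventually.of_forall fun x => ?_
    rw [Real.norm_eq_abs, abs_mul]
    exact mul_le_mul_of_nonneg_right (hGbound x) (abs_nonneg _)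
  have hΦ'int : Integrable Φ' volume := by
    rw [hΦ'def]; exact hD1int.add hD2int
  -- main claim
  have hmain : ∫ x, Φ' x = 0 := by
    have hmp := Stmt9Aux.prodEquiv_measurePreserving i
    have hmps : MeasurePreserving (Stmt9Aux.prodEquiv i).symm volume volume :=
      MeasurePreserving.symm _ hmp
    have hint2 : Integrable (Φ' ∘ (Stmt9Aux.prodEquiv i).symm) volume :=
      (hmps.integrable_comp_emb (MeasurableEquiv.measurableEmbedding _)).mpr hΦ'int
    have htrans : ∫ x, Φ' x
        = ∫ z : ℝ × (Fin n → ℝ), Φ' ((Stmt9Aux.prodEquiv i).symm z) :=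
      (hmps.integral_comp (MeasurableEquiv.measurableEmbedding _) Φ').symm
    rw [htrans]
    have hprodint : Integrable (fun z : ℝ × (Fin n → ℝ) =>
        Φ' ((Stmt9Aux.prodEquiv i).symm z)) ((volume : Measure ℝ).prod volume) := by
      rw [← Measure.volume_eq_prod]; exact hint2
    rw [Measure.volume_eq_prod, integral_prod_symm _ hprodint]
    apply integral_eq_zero_of_ae
    have hBad : ∀ᵐ w : Fin n → ℝ,
        w ∉ ⋃ k : Fin K, frontier (Stmt9Aux.pmap i '' (Ωs k)) := by
      rw [← measure_eq_zero_iff_ae_notMem]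
      refine measure_iUnion_null fun k => ?_
      exact ((hconv k).is_linear_image (Stmt9Aux.pmap_isLinear i)).addHaar_frontier volume
    have hslice := hprodint.prod_left_ae
    filter_upwards [hBad, hslice] with w hw1 hw2
    simp only [Stmt9Aux.prodEquiv_symm_apply] at hw2 ⊢
    -- the exceptional set
    set s : Set ℝ := {t : ℝ | Stmt9Aux.Xmap i w t ∈ tsupport ψ ∧
      ∀ k, Stmt9Aux.Xmap i w t ∉ Ωs k} with hsdef
    have hscount : s.Countable := by
      have hsub2 : s ⊆ ⋃ k : Fin K,
          {t : ℝ | Stmt9Aux.Xmap i w t ∈ closure (Ωs k) \ Ωs k} := by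
        rintro t ⟨ht1, ht2⟩
        have hxΩ : Stmt9Aux.Xmap i w t ∈ Ω := hψsupp ht1
        obtain ⟨k, hk⟩ : ∃ k, Stmt9Aux.Xmap i w t ∈ closure (Ωs k) := by
          simpa using hcover hxΩ
        exact mem_iUnion.2 ⟨k, hk, ht2 k⟩
      refine Set.Countable.mono hsub2 (countable_iUnion fun k => ?_)
      set J : Set ℝ := {t : ℝ | Stmt9Aux.Xmap i w t ∈ closure (Ωs k) \ Ωs k} with hJdef
      by_cases hI : ∃ p, Stmt9Aux.Xmap i w p ∈ Ωs k
      · obtain ⟨p, hp⟩ := hI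
        have hseg : ∀ t₂ t₃ : ℝ, Stmt9Aux.Xmap i w t₃ ∈ closure (Ωs k) →
            t₂ ∈ openSegment ℝ p t₃ → Stmt9Aux.Xmap i w t₂ ∈ Ωs k := by
          intro t₂ t₃ h3 h2
          obtain ⟨c, c', hc, hc', hsum, rfl⟩ := h2
          have hx2 : Stmt9Aux.Xmap i w (c • p + c' • t₃)
              = c • Stmt9Aux.Xmap i w p + c' • Stmt9Aux.Xmap i w t₃ := by
            rw [Stmt9Aux.Xmap_affine i w (c • p + c' • t₃), Stmt9Aux.Xmap_affine i w p,
              Stmt9Aux.Xmap_affine i w t₃]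
            have h1 : c + c' = 1 := hsum
            match_scalars <;> simp <;> ring_nf <;> nlinarith [h1]
          have hmem := (hconv k).openSegment_interior_closure_subset_interior
            (by rwa [(hopen k).interior_eq]) h3
            (⟨c, c', hc, hc', hsum, hx2.symm⟩ : _ ∈ openSegment ℝ _ _)
          rwa [(hopen k).interior_eq] at hmem
        have hbetween : ∀ q r : ℝ, Stmt9Aux.Xmap i w q ∈ closure (Ωs k) →
            r ∈ Ioo (min p q) (max p q) → Stmt9Aux.Xmap i w r ∈ Ωs k := by
          intro q r hq hr
          have hpq : p ≠ q := by
            rintro rfl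
            simp at hr
          refine hseg r q hq ?_
          rw [openSegment_eq_Ioo' hpq]
          exact hr
        have hsub1 : (J ∩ Iio p).Subsingleton := by
          intro t₁ h₁ t₂ h₂
          by_contra hne
          rcases lt_or_gt_of_ne hne with hlt | hlt
          · refine h₂.1.2 (hbetween t₁ t₂ h₁.1.1 (mem_Ioo.mpr ⟨?_, ?_⟩))
            · exact (min_le_right p t₁).trans_lt hlt
            · exact lt_max_iff.mpr (Or.inl (mem_Iio.mp h₂.2))
          · refine h₁.1.2 (hbetween t₂ t₁ h₂.1.1 (mem_Ioo.mpr ⟨?_, ?_⟩))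
            · exact (min_le_right p t₂).trans_lt hlt
            · exact lt_max_iff.mpr (Or.inl (mem_Iio.mp h₁.2))
        have hsub3 : (J ∩ Ioi p).Subsingleton := by
          intro t₁ h₁ t₂ h₂
          by_contra hne
          rcases lt_or_gt_of_ne hne with hlt | hlt
          · refine h₁.1.2 (hbetween t₂ t₁ h₂.1.1 (mem_Ioo.mpr ⟨?_, ?_⟩))
            · exact (min_le_left p t₂).trans_lt (mem_Ioi.mp h₁.2)
            · exact hlt.trans_le (le_max_right p t₂)
          · refine h₂.1.2 (hbetween t₁ t₂ h₁.1.1 (mem_Ioo.mpr ⟨?_, ?_⟩))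
            · exact (min_le_left p t₁).trans_lt (mem_Ioi.mp h₂.2)
            · exact hlt.trans_le (le_max_right p t₁)
        have hJsub : J ⊆ (J ∩ Iio p) ∪ (J ∩ Ioi p) := by
          intro t ht
          rcases lt_trichotomy t p with h | h | h
          · exact Or.inl ⟨ht, h⟩
          · exfalso; rw [h] at ht; exact ht.2 hp
          · exact Or.inr ⟨ht, h⟩
        exact Set.Countable.mono hJsub (hsub1.countable.union hsub3.countable)
      · have hJempty : J ⊆ ∅ := by
          intro t₀ ht₀
          exfalso
          have hwrep : w = Stmt9Aux.pmap i (Stmt9Aux.Xmap i w t₀) := by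
            funext j
            simp [Stmt9Aux.pmap, Fin.removeNth, Stmt9Aux.Xmap_succAbove]
          have hwcl : w ∈ closure (Stmt9Aux.pmap i '' (Ωs k)) := by
            rw [hwrep]
            exact (image_closure_subset_closure_image (Stmt9Aux.pmap_continuous i))
              ⟨_, ht₀.1, rfl⟩
          have hwnf : w ∉ frontier (Stmt9Aux.pmap i '' (Ωs k)) :=
            fun h => hw1 (mem_iUnion.2 ⟨k, h⟩)
          have hwint : w ∈ interior (Stmt9Aux.pmap i '' (Ωs k)) := by
            by_contra hno
            exact hwnf ⟨hwcl, hno⟩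
          obtain ⟨x, hxk, hpx⟩ := interior_subset hwint
          refine hI ⟨x i, ?_⟩
          have : Stmt9Aux.Xmap i w (x i) = x := by
            rw [← hpx]
            exact Stmt9Aux.Xmap_pmap i x
          rwa [this]
        exact Set.Countable.mono hJempty countable_empty
    -- apply 1D FTC
    have hucont : Continuous fun t => Φ (Stmt9Aux.Xmap i w t) :=
      hΦcont.comp (Stmt9Aux.Xmap_continuous_t i w)
    have hucs : HasCompactSupport fun t => Φ (Stmt9Aux.Xmap i w t) := by
      obtain ⟨R₀, hR₀⟩ : ∃ R₀, ∀ x ∈ tsupport ψ, ‖x‖ ≤ R₀ := by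
        obtain ⟨R₀, h⟩ := hψc.isBounded.subset_closedBall 0
        exact ⟨R₀, fun x hx => by simpa [mem_closedBall_zero_iff] using h hx⟩
      refine HasCompactSupport.intro (isCompact_Icc (a := -R₀) (b := R₀)) fun t ht => ?_
      have hx' : Stmt9Aux.Xmap i w t ∉ tsupport ψ := by
        intro hmem
        have h1 : ‖Stmt9Aux.Xmap i w t‖ ≤ R₀ := hR₀ _ hmem
        have h2 : |t| ≤ ‖Stmt9Aux.Xmap i w t‖ := by
          have hinner : ⟪Stmt9Aux.Xmap i w t, v⟫ = t := by
            rw [hv]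
            rw [EuclideanSpace.inner_single_right]
            simp [Stmt9Aux.Xmap_self]
          calc |t| = |⟪Stmt9Aux.Xmap i w t, v⟫| := by rw [hinner]
          _ ≤ ‖Stmt9Aux.Xmap i w t‖ * ‖v‖ := abs_real_inner_le_norm _ _
          _ = ‖Stmt9Aux.Xmap i w t‖ := by
              rw [hv, EuclideanSpace.norm_single]; simp
        have := abs_le.mp (h2.trans h1)
        exact ht ⟨this.1, this.2⟩
      simp only [hΦdef, hψzero _ hx', mul_zero]
    have huder : ∀ t ∉ s, HasDerivAt (fun t' => Φ (Stmt9Aux.Xmap i w t'))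
        (Φ' (Stmt9Aux.Xmap i w t)) t := by
      intro t hts
      by_cases hsupp : Stmt9Aux.Xmap i w t ∈ tsupport ψ
      · obtain ⟨k, hk⟩ : ∃ k, Stmt9Aux.Xmap i w t ∈ Ωs k := by
          by_contra hno
          push_neg at hno
          exact hts ⟨hsupp, hno⟩
        have hO : IsOpen ((fun t' => Stmt9Aux.Xmap i w t') ⁻¹' (Ωs k)) :=
          (hopen k).preimage (Stmt9Aux.Xmap_continuous_t i w)
        have hψX : HasDerivAt (fun t' => ψ (Stmt9Aux.Xmap i w t'))
            (fderiv ℝ ψ (Stmt9Aux.Xmap i w t) v) t :=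
          (hψd _).hasFDerivAt.comp_hasDerivAt t (Stmt9Aux.Xmap_hasDerivAt i w t)
        have hfaff : HasDerivAt (fun t' => ⟪a k, Stmt9Aux.Xmap i w t'⟫ + b k)
            ⟪a k, v⟫ t := by
          have h1 : HasDerivAt (fun t' => ⟪a k, Stmt9Aux.Xmap i w t'⟫) ⟪a k, v⟫ t := by
            exact (innerSL ℝ (a k)).hasFDerivAt.comp_hasDerivAt t
              (Stmt9Aux.Xmap_hasDerivAt i w t)
          exact h1.add_const (b k)
        have hfX : HasDerivAt (fun t' => f (Stmt9Aux.Xmap i w t')) ⟪a k, v⟫ t := by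
          refine hfaff.congr_of_eventuallyEq ?_
          filter_upwards [hO.mem_nhds hk] with t' ht'
          exact haff k _ ht'
        have hprod := hfX.mul hψX
        refine hprod.congr_deriv ?_
        have hGx : G (Stmt9Aux.Xmap i w t) = a k i := hGk k _ hk
        have hav : ⟪a k, v⟫ = a k i := by
          rw [hv, EuclideanSpace.inner_single_right]
          simp
        simp only [hΦ'def, hGx, hav]
        ring
      · have hev : (fun t' => Φ (Stmt9Aux.Xmap i w t')) =ᶠ[nhds t] fun _ => 0 := by
          have hO : IsOpen ((fun t' => Stmt9Aux.Xmap i w t') ⁻¹' (tsupport ψ)ᶜ) :=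
            (isClosed_tsupport ψ).isOpen_compl.preimage (Stmt9Aux.Xmap_continuous_t i w)
          filter_upwards [hO.mem_nhds hsupp] with t' ht'
          simp only [hΦdef, hψzero _ ht', mul_zero]
        have h0 : HasDerivAt (fun t' => Φ (Stmt9Aux.Xmap i w t')) 0 t :=
          (hasDerivAt_const t (0:ℝ)).congr_of_eventuallyEq hev
        convert h0 using 1
        simp only [hΦ'def, hfzero _ hsupp, hψzero _ hsupp,
          ContinuousLinearMap.zero_apply, mul_zero, add_zero]
    exact oneDimFTC hscount hucont hucs huder hw2
  -- conclude
  have hLHS : ∫ x in Ω, f x * fderiv ℝ ψ x v = ∫ x, f x * fderiv ℝ ψ x v :=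
    setIntegral_eq_integral_of_forall_compl_eq_zero fun x hx => by
      have hx' : x ∉ tsupport ψ := fun h => hx (hψsupp h)
      simp only [hfzero x hx', ContinuousLinearMap.zero_apply, mul_zero]
  have hRHS1 : ∫ x in Ω, g x i * ψ x = ∫ x in Ω, G x * ψ x := by
    refine setIntegral_congr_fun hΩ.measurableSet fun x hx => ?_
    by_cases hxU : ∃ k, x ∈ Ωs k
    · obtain ⟨k, hk⟩ := hxU
      rw [hg1 k x hk, hGk k x hk]
    · push_neg at hxU
      have hgz := hg2 x ⟨hx, fun h => by
        obtain ⟨k, hk⟩ := mem_iUnion.1 h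
        exact hxU k hk⟩
      rw [hgz, hG0 x hxU]
      simp
  have hRHS2 : ∫ x in Ω, G x * ψ x = ∫ x, G x * ψ x :=
    setIntegral_eq_integral_of_forall_compl_eq_zero fun x hx => by
      have hx' : x ∉ tsupport ψ := fun h => hx (hψsupp h)
      simp [hψzero x hx']
  rw [hLHS, hRHS1, hRHS2]
  have hsplit : ∫ x, Φ' x = (∫ x, f x * fderiv ℝ ψ x v) + ∫ x, G x * ψ x := by
    rw [hΦ'def]
    exact integral_add hD1int hD2int
  rw [hsplit] at hmain
  linarith
end
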